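/- arXiv:1510.05843 — 2 statements merged into one kernel-verified Lean document; each statement's English description precedes it below -/
import Mathlib

section
/- Let X be a compact metric space and T : X → X an injective continuous map. Let y ∈ X be a periodic point of period n, let x ∈ X be non-periodic, and set t_y = min(n−1, 2d) for an integer d ≥ 0. Then there exist a set U_y ∋ y open in H_n with closure Ū_y (taken in X) contained in H_n, and a set U_x ∋ x open in X with closure Ū_x contained in X ∖ P_n, such that the sets Ū_x, TŪ_x, …, T^{2d}Ū_x, Ū_y, TŪ_y, …, T^{t_y}Ū_y are pairwise disjoint. -/
open Function Set Topology

/-- The set of periodic points of `T` of period at most `n`. -/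
def periodicLE {X : Type*} (T : X → X) (n : ℕ) : Set X :=
  {x | ∃ p, 1 ≤ p ∧ p ≤ n ∧ T^[p] x = x}

lemma periodicLE_isClosed {X : Type*} [MetricSpace X] (T : X → X) (hTc : Continuous T)
    (n : ℕ) : IsClosed (periodicLE T n) := by
  have : periodicLE T n = ⋃ p ∈ Finset.Icc 1 n, {z | T^[p] z = z} := by
    ext z
    simp only [periodicLE, mem_setOf_eq, mem_iUnion, Finset.mem_Icc, exists_prop]
    constructor
    · rintro ⟨p, h1, h2, h3⟩; exact ⟨p, ⟨h1, h2⟩, h3⟩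
    · rintro ⟨p, ⟨h1, h2⟩, h3⟩; exact ⟨p, h1, h2, h3⟩
  rw [this]
  apply isClosed_biUnion_finset
  intro p _
  exact isClosed_eq (hTc.iterate p) continuous_id

lemma iterate_mem_periodicLE_iff {X : Type*} (T : X → X) (hTi : Function.Injective T)
    (n k : ℕ) (z : X) : T^[k] z ∈ periodicLE T n ↔ z ∈ periodicLE T n := by
  have key : ∀ p, T^[p] (T^[k] z) = T^[k] z ↔ T^[p] z = z := by
    intro p
    have h1 : T^[p] (T^[k] z) = T^[k] (T^[p] z) := by
      rw [← Function.iterate_add_apply, ← Function.iterate_add_apply, add_comm]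
    rw [h1, (hTi.iterate k).eq_iff]
  simp only [periodicLE, mem_setOf_eq]
  constructor
  · rintro ⟨p, h1, h2, h3⟩; exact ⟨p, h1, h2, (key p).1 h3⟩
  · rintro ⟨p, h1, h2, h3⟩; exact ⟨p, h1, h2, (key p).2 h3⟩


lemma exists_pos_forall_le_dist {α X : Type*} [Fintype α] [MetricSpace X] (f : α → X)
    (hf : ∀ i j : α, i ≠ j → f i ≠ f j) :
    ∃ ε > 0, ∀ i j : α, i ≠ j → ε ≤ dist (f i) (f j) := by
  classical
  set s : Finset (α × α) := Finset.univ.filter (fun p => p.1 ≠ p.2) with hs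
  by_cases hsne : s.Nonempty
  · refine ⟨s.inf' hsne (fun p => dist (f p.1) (f p.2)), ?_, ?_⟩
    · refine (Finset.lt_inf'_iff hsne).2 ?_
      rintro ⟨i, j⟩ hij
      rw [hs, Finset.mem_filter] at hij
      exact dist_pos.2 (hf i j hij.2)
    · intro i j hij
      refine Finset.inf'_le (fun p : α × α => dist (f p.1) (f p.2)) (b := (i, j)) ?_
      rw [hs, Finset.mem_filter]
      exact ⟨Finset.mem_univ _, hij⟩
  · refine ⟨1, one_pos, fun i j hij => absurd ?_ hsne⟩
    refine ⟨(i, j), ?_⟩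
    rw [hs, Finset.mem_filter]
    exact ⟨Finset.mem_univ _, hij⟩

theorem stmt5 {X : Type*} [MetricSpace X] [CompactSpace X]
    (T : X → X) (hTc : Continuous T) (hTi : Function.Injective T)
    (d : ℕ) (n : ℕ) (hn : 1 ≤ n)
    -- `y` is periodic of (minimal) period `n`
    (y : X) (hy : Function.minimalPeriod T y = n)
    -- `x` is non-periodic
    (x : X) (hx : ∀ p : ℕ, 1 ≤ p → T^[p] x ≠ x) :
    -- `H_n = P_n ∖ P_{n-1}` is the set of points of period exactly `n`
    ∃ Uy Ux : Set X,
      y ∈ Uy ∧ Uy ⊆ periodicLE T n \ periodicLE T (n - 1) ∧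
      -- `U_y` is open in the subspace `H_n`
      IsOpen ((fun z : ↥(periodicLE T n \ periodicLE T (n - 1)) => (z : X)) ⁻¹' Uy) ∧
      closure Uy ⊆ periodicLE T n \ periodicLE T (n - 1) ∧
      x ∈ Ux ∧ IsOpen Ux ∧ closure Ux ⊆ (periodicLE T n)ᶜ ∧
      -- the closures `Ū_x, TŪ_x, …, T^{2d}Ū_x, Ū_y, TŪ_y, …, T^{t_y}Ū_y`
      -- are pairwise disjoint, where `t_y = min (n-1) (2d)`
      Pairwise (Disjoint on
        (Sum.elim (fun k : Fin (2 * d + 1) => T^[(k : ℕ)] '' closure Ux)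
                  (fun k : Fin (min (n - 1) (2 * d) + 1) =>
                    T^[(k : ℕ)] '' closure Uy))) := by
  set ty := min (n - 1) (2 * d) with hty
  -- basic facts
  have hxnP : ∀ k : ℕ, T^[k] x ∉ periodicLE T n := by
    intro k hk
    rw [iterate_mem_periodicLE_iff T hTi] at hk
    obtain ⟨p, h1, _, h3⟩ := hk
    exact hx p h1 h3
  have hyn : T^[n] y = y := by rw [← hy]; exact Function.iterate_minimalPeriod
  have hyPn : y ∈ periodicLE T n := ⟨n, hn, le_rfl, hyn⟩
  have hyP : ∀ k : ℕ, T^[k] y ∈ periodicLE T n := by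
    intro k; rw [iterate_mem_periodicLE_iff T hTi]; exact hyPn
  have hynP : y ∉ periodicLE T (n - 1) := by
    rintro ⟨p, h1, h2, h3⟩
    have : Function.minimalPeriod T y ≤ p :=
      Function.IsPeriodicPt.minimalPeriod_le h1 h3
    omega
  have hxx : ∀ i j : ℕ, i < j → T^[i] x ≠ T^[j] x := by
    intro i j hij heq
    apply hx (j - i) (by omega)
    apply hTi.iterate i
    rw [← Function.iterate_add_apply]
    have : i + (j - i) = j := by omega
    rw [this, ← heq]
  have hxy : ∀ i j : ℕ, T^[i] x ≠ T^[j] y := by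
    intro i j heq
    exact hxnP i (heq ▸ hyP j)
  -- the distinguished points
  set pts : Fin (2 * d + 1) ⊕ Fin (ty + 1) → X :=
    Sum.elim (fun k : Fin (2 * d + 1) => T^[(k : ℕ)] x)
             (fun k : Fin (ty + 1) => T^[(k : ℕ)] y) with hpts
  have hne : ∀ i j, i ≠ j → pts i ≠ pts j := by
    rintro (i | i) (j | j) hij
    · have hvij : (i : ℕ) ≠ (j : ℕ) := fun h => hij (by exact congrArg Sum.inl (Fin.ext h))
      rcases lt_or_gt_of_ne hvij with h | h
      · exact hxx i j h
      · exact fun heq => hxx j i h heq.symm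
    · exact hxy i j
    · exact fun heq => hxy j i heq.symm
    · have hvij : (i : ℕ) ≠ (j : ℕ) := fun h => hij (by exact congrArg Sum.inr (Fin.ext h))
      intro heq
      apply hvij
      have hin : (i : ℕ) ∈ Iio (Function.minimalPeriod T y) := by
        rw [hy]; simp only [mem_Iio]
        have := i.isLt
        have := Nat.min_le_left (n - 1) (2 * d)
        omega
      have hjn : (j : ℕ) ∈ Iio (Function.minimalPeriod T y) := by
        rw [hy]; simp only [mem_Iio]
        have := j.isLt
        have := Nat.min_le_left (n - 1) (2 * d)
        omega
      exact Function.iterate_injOn_Iio_minimalPeriod hin hjn heq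
  -- a positive separation distance
  obtain ⟨ε, hεpos, hεd⟩ := exists_pos_forall_le_dist pts hne
  -- continuity: find δ's for x and y
  have hF : Continuous (fun z : X => (fun k : Fin (2 * d + 1) => T^[(k : ℕ)] z)) :=
    continuous_pi fun k => hTc.iterate k
  have hδ : ∀ w : X, ∃ δ > 0, ∀ z : X, dist z w < δ →
      ∀ k : Fin (2 * d + 1), dist (T^[(k : ℕ)] z) (T^[(k : ℕ)] w) < ε / 3 := by
    intro w
    have := (Metric.continuousAt_iff).1 (hF.continuousAt (x := w)) (ε / 3) (by linarith)
    obtain ⟨δ, hδpos, hδ⟩ := this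
    refine ⟨δ, hδpos, fun z hz k => ?_⟩
    calc dist (T^[(k : ℕ)] z) (T^[(k : ℕ)] w)
        ≤ dist (fun k : Fin (2 * d + 1) => T^[(k : ℕ)] z)
            (fun k : Fin (2 * d + 1) => T^[(k : ℕ)] w) :=
          dist_le_pi_dist (fun k : Fin (2 * d + 1) => T^[(k : ℕ)] z)
            (fun k : Fin (2 * d + 1) => T^[(k : ℕ)] w) k
      _ < ε / 3 := hδ hz
  obtain ⟨δx, hδxpos, hδx⟩ := hδ x
  obtain ⟨δy, hδypos, hδy⟩ := hδ y
  -- neighborhoods avoiding the closed periodic sets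
  have hPnc : IsClosed (periodicLE T n) := periodicLE_isClosed T hTc n
  have hPn1c : IsClosed (periodicLE T (n - 1)) := periodicLE_isClosed T hTc (n - 1)
  obtain ⟨ρx, hρxpos, hρx⟩ := Metric.isOpen_iff.1 hPnc.isOpen_compl x (by
    simpa using hxnP 0)
  obtain ⟨ρy, hρypos, hρy⟩ := Metric.isOpen_iff.1 hPn1c.isOpen_compl y hynP
  set rx : ℝ := min δx ρx / 2 with hrx
  set ry : ℝ := min δy ρy / 2 with hry
  have hrxpos : 0 < rx := by rw [hrx]; positivity
  have hrypos : 0 < ry := by rw [hry]; positivity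
  set Ux : Set X := Metric.ball x rx with hUx
  set Uy : Set X := (periodicLE T n \ periodicLE T (n - 1)) ∩ Metric.ball y ry with hUy
  have hclUx : closure Ux ⊆ Metric.closedBall x rx := by
    rw [hUx]; exact Metric.closure_ball_subset_closedBall
  have hcbx : Metric.closedBall x rx ⊆ Metric.ball x (min δx ρx) :=
    Metric.closedBall_subset_ball (by rw [hrx]; linarith [lt_min hδxpos hρxpos])
  have hclUxδ : closure Ux ⊆ Metric.ball x δx :=
    fun z hz => Metric.ball_subset_ball (min_le_left _ _) (hcbx (hclUx hz))
  have hclUxρ : closure Ux ⊆ Metric.ball x ρx :=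
    fun z hz => Metric.ball_subset_ball (min_le_right _ _) (hcbx (hclUx hz))
  have hclUy : closure Uy ⊆ Metric.closedBall y ry := by
    apply closure_minimal _ Metric.isClosed_closedBall
    exact (inter_subset_right).trans Metric.ball_subset_closedBall
  have hcby : Metric.closedBall y ry ⊆ Metric.ball y (min δy ρy) :=
    Metric.closedBall_subset_ball (by rw [hry]; linarith [lt_min hδypos hρypos])
  have hclUyδ : closure Uy ⊆ Metric.ball y δy :=
    fun z hz => Metric.ball_subset_ball (min_le_left _ _) (hcby (hclUy hz))
  have hclUyρ : closure Uy ⊆ Metric.ball y ρy :=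
    fun z hz => Metric.ball_subset_ball (min_le_right _ _) (hcby (hclUy hz))
  have hclUyPn : closure Uy ⊆ periodicLE T n :=
    closure_minimal (inter_subset_left.trans diff_subset) hPnc
  refine ⟨Uy, Ux, ?_, ?_, ?_, ?_, ?_, ?_, ?_, ?_⟩
  · exact ⟨⟨hyPn, hynP⟩, Metric.mem_ball_self hrypos⟩
  · exact inter_subset_left
  · have : (fun z : ↥(periodicLE T n \ periodicLE T (n - 1)) => (z : X)) ⁻¹' Uy =
        (fun z : ↥(periodicLE T n \ periodicLE T (n - 1)) => (z : X)) ⁻¹' (Metric.ball y ry) := by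
      ext z
      simp only [mem_preimage, hUy, mem_inter_iff]
      exact and_iff_right z.2
    rw [this]
    exact Metric.isOpen_ball.preimage continuous_subtype_val
  · intro z hz
    exact ⟨hclUyPn hz, hρy (hclUyρ hz)⟩
  · exact Metric.mem_ball_self hrxpos
  · exact Metric.isOpen_ball
  · intro z hz
    exact hρx (hclUxρ hz)
  · -- disjointness
    have key : ∀ i, Sum.elim (fun k : Fin (2 * d + 1) => T^[(k : ℕ)] '' closure Ux)
        (fun k : Fin (ty + 1) => T^[(k : ℕ)] '' closure Uy) i ⊆ Metric.ball (pts i) (ε / 3) := by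
      rintro (k | k) w hw
      · obtain ⟨z, hz, rfl⟩ := hw
        exact hδx z (hclUxδ hz) k
      · obtain ⟨z, hz, rfl⟩ := hw
        have hk : (k : ℕ) < 2 * d + 1 := by
          have := k.isLt
          have := Nat.min_le_right (n - 1) (2 * d)
          omega
        exact hδy z (hclUyδ hz) ⟨(k : ℕ), hk⟩
    intro i j hij
    have hd : ε / 3 + ε / 3 ≤ dist (pts i) (pts j) := by
      have := hεd i j hij
      linarith
    exact Set.disjoint_of_subset (key i) (key j) (Metric.ball_disjoint_ball hd)
end

section
/- Let X be a compact metric space and T : X → X an injective continuous map, and let d ≥ 0 be an integer. Then the set C_3 of pairs (x,y) ∈ X×X such that exactly one of x, y is periodic can be covered by countably many compact sets of the form Ū_x × Ū_y, where y is periodic of some period n, x is non-periodic, Ū_y ⊂ H_n, Ū_x ⊂ X ∖ P_n, and the sets Ū_x, TŪ_x, …, T^{2d}Ū_x, Ū_y, TŪ_y, …, T^{min(n−1,2d)}Ū_y are pairwise disjoint (together with the symmetric products Ū_y × Ū_x). -/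
open Function Set Topology

/-- The set of all periodic points of `T`. -/
def periodicPtsSet {X : Type*} (T : X → X) : Set X :=
  {x | ∃ p, 1 ≤ p ∧ T^[p] x = x}

/-
Fix a non-periodic `x` and a `y` of exact period `n + 1`. Since `T` is injective, the points
`x, T x, …, T^{2d} x, y, T y, …, T^{min(n, 2d)} y` are pairwise distinct, so by continuity
the corresponding images of small closed balls around `x` and `y` are pairwise disjoint.
Shrinking further, the ball around `x` avoids the closed set `P_{n+1}` and the ball around `y`
avoids `P_n`; cutting the latter down to `P_{n+1}` keeps it compact and inside `H_{n+1}`, and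
the product is still a neighbourhood of `(x, y)` relative to `(X ∖ P) × H_{n+1}`. Since
`X × X` is second countable, countably many such products cover `(X ∖ P) × H_{n+1}`; taking
the union over `n` and the mirrored products covers `C₃`.
-/

open Filter Metric

theorem eventually_pairwise_disjoint_image_closedBall {ι X Y : Type*} [Finite ι]
    [PseudoMetricSpace X] [TopologicalSpace Y] [T2Space Y] {g : ι → X → Y} {b : ι → X}
    (hg : ∀ i, ContinuousAt (g i) (b i)) (hinj : Injective fun i => g i (b i)) :
    ∀ᶠ ε in 𝓝 (0 : ℝ), Pairwise (Disjoint on fun i => g i '' closedBall (b i) ε) := by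
  have hsmall (i : ι) : Tendsto (fun ε => g i '' closedBall (b i) ε) (𝓝 0)
      (𝓝 (g i (b i))).smallSets :=
    (hg i).image_smallSets.comp (tendsto_closedBall_smallSets (b i))
  refine eventually_all.2 fun i => eventually_all.2 fun j => ?_
  rcases eq_or_ne i j with rfl | hij
  · exact Eventually.of_forall fun _ h => (h rfl).elim
  obtain ⟨U, hU, V, hV, hUV⟩ := Filter.disjoint_iff.1 (disjoint_nhds_nhds.2 (hinj.ne hij))
  filter_upwards [tendsto_smallSets_iff.1 (hsmall i) U hU,
    tendsto_smallSets_iff.1 (hsmall j) V hV] with ε hi hj _ using hUV.mono hi hj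

theorem exists_countable_cover_of_forall_mem_nhdsWithin {α : Type*} [TopologicalSpace α]
    [SecondCountableTopology α] {s : Set α} {p : Set α → Prop}
    (h : ∀ z ∈ s, ∃ K ∈ 𝓝[s] z, p K) :
    ∃ 𝒦 : Set (Set α), 𝒦.Countable ∧ (∀ K ∈ 𝒦, p K) ∧ s ⊆ ⋃₀ 𝒦 := by
  choose! K hK hpK using h
  obtain ⟨t, hts, htc, hcov⟩ := TopologicalSpace.countable_cover_nhdsWithin hK
  exact ⟨K '' t, htc.image K, forall_mem_image.2 fun z hz => hpK z (hts hz),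
    by rwa [sUnion_image]⟩

theorem exists_seq_cover_of_countable {α : Type*} {s : Set α} {p : Set α → Prop} (hp : p ∅)
    {𝒦 : Set (Set α)} (h𝒦 : 𝒦.Countable) (hp𝒦 : ∀ K ∈ 𝒦, p K) (hs : s ⊆ ⋃₀ 𝒦) :
    ∃ K : ℕ → Set α, s ⊆ ⋃ i, K i ∧ ∀ i, p (K i) := by
  obtain ⟨K, hK⟩ := (h𝒦.insert ∅).exists_eq_range (insert_nonempty _ _)
  refine ⟨K, ?_, fun i => ?_⟩
  · rw [← sUnion_range, ← hK]
    exact hs.trans (sUnion_mono (subset_insert _ _))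
  · rcases (hK ▸ mem_range_self i : K i ∈ insert ∅ 𝒦) with h | h
    exacts [h ▸ hp, hp𝒦 _ h]

section Periodic

variable {X : Type*} {T : X → X}

theorem mem_periodicLE_iff {x : X} {n : ℕ} :
    x ∈ periodicLE T n ↔ 0 < minimalPeriod T x ∧ minimalPeriod T x ≤ n := by
  constructor
  · rintro ⟨p, hp, hpn, hpx⟩
    exact ⟨IsPeriodicPt.minimalPeriod_pos hp hpx,
      (IsPeriodicPt.minimalPeriod_le hp hpx).trans hpn⟩
  · rintro ⟨hpos, hle⟩
    exact ⟨_, hpos, hle, iterate_minimalPeriod⟩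

theorem isClosed_periodicLE [TopologicalSpace X] [T2Space X] (hT : Continuous T) (n : ℕ) :
    IsClosed (periodicLE T n) := by
  have h : periodicLE T n = ⋃ p ∈ Finset.Icc 1 n, {x | T^[p] x = x} := by
    ext x; simp [periodicLE, and_assoc]
  rw [h]
  exact isClosed_biUnion_finset fun p _ => isClosed_eq (hT.iterate p) continuous_id

theorem Function.Injective.injective_iterate_apply_of_notMem_periodicPts (hT : Injective T)
    {x : X} (hx : x ∉ periodicPts T) : Injective (T^[·] x) := by
  intro m n h
  by_contra hmn
  rcases lt_or_gt_of_ne hmn with hlt | hlt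
  · exact hx (mk_mem_periodicPts (by omega) (iterate_cancel hT h.symm))
  · exact hx (mk_mem_periodicPts (by omega) (iterate_cancel hT h))

theorem Function.Injective.iterate_apply_ne_of_notMem_periodicPts (hT : Injective T)
    {x y : X} (hx : x ∉ periodicPts T) (hy : y ∈ periodicPts T) (m n : ℕ) :
    T^[m] x ≠ T^[n] y := by
  intro h
  obtain ⟨p, hp, hpy⟩ := hy
  refine hx (mk_mem_periodicPts hp (hT.iterate m ?_))
  rw [← iterate_add_apply, add_comm, iterate_add_apply, h, ← iterate_add_apply, add_comm,
    iterate_add_apply, hpy.eq]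

theorem Function.Injective.injective_sumElim_iterate_apply (hT : Injective T) {x y : X}
    (hx : x ∉ periodicPts T) {n : ℕ} (hy : minimalPeriod T y = n + 1) (a b : ℕ) :
    Injective (Sum.elim (fun k : Fin a => T^[k] x) (fun k : Fin (min n b + 1) => T^[k] y)) := by
  have hyper : y ∈ periodicPts T := minimalPeriod_pos_iff_mem_periodicPts.1 (by omega)
  refine .sumElim ((hT.injective_iterate_apply_of_notMem_periodicPts hx).comp Fin.val_injective)
    (fun i j h => Fin.ext (iterate_injOn_Iio_minimalPeriod ?_ ?_ h))
    fun i j => hT.iterate_apply_ne_of_notMem_periodicPts hx hyper i j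
  all_goals simp only [mem_Iio, hy]; omega

end Periodic

section Separation

variable {X : Type*} [TopologicalSpace X]

/-- `A`, `B` play the roles of `Ū_x`, `Ū_y` for a `y` of period `n`. -/
def IsSeparatedPair (T : X → X) (d n : ℕ) (A B : Set X) : Prop :=
  1 ≤ n ∧ IsCompact A ∧ IsCompact B ∧
    B ⊆ periodicLE T n \ periodicLE T (n - 1) ∧ A ⊆ (periodicLE T n)ᶜ ∧
    Pairwise (Disjoint on
      (Sum.elim (fun k : Fin (2 * d + 1) => T^[(k : ℕ)] '' A)
        (fun k : Fin (min (n - 1) (2 * d) + 1) => T^[(k : ℕ)] '' B)))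

def IsSeparatedRectangle (T : X → X) (d : ℕ) (K : Set (X × X)) : Prop :=
  ∃ n A B, IsSeparatedPair T d n A B ∧ (K = A ×ˢ B ∨ K = B ×ˢ A)

theorem isSeparatedRectangle_empty {T : X → X} (d : ℕ) : IsSeparatedRectangle T d ∅ :=
  ⟨1, ∅, ∅, ⟨le_rfl, isCompact_empty, isCompact_empty, empty_subset _, empty_subset _,
    fun i j _ => by rcases i with k | k <;> simp⟩, .inl empty_prod.symm⟩

end Separation

section Cover

variable {X : Type*} [MetricSpace X] [CompactSpace X] {T : X → X}

theorem eventually_isSeparatedPair_closedBall (hTc : Continuous T) (hTi : Injective T)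
    (d : ℕ) {x y : X} (hx : x ∉ periodicPts T) {n : ℕ} (hy : minimalPeriod T y = n + 1) :
    ∀ᶠ ε in 𝓝 0,
      IsSeparatedPair T d (n + 1) (closedBall x ε) (closedBall y ε ∩ periodicLE T (n + 1)) := by
  have hxP : (periodicLE T (n + 1))ᶜ ∈ 𝓝 x :=
    (isClosed_periodicLE hTc _).isOpen_compl.mem_nhds fun h => hx
      (minimalPeriod_pos_iff_mem_periodicPts.1 (mem_periodicLE_iff.1 h).1)
  have hyP : (periodicLE T n)ᶜ ∈ 𝓝 y :=
    (isClosed_periodicLE hTc _).isOpen_compl.mem_nhds fun h => by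
      have := (mem_periodicLE_iff.1 h).2; omega
  have hdisj := eventually_pairwise_disjoint_image_closedBall
    (g := Sum.elim (fun k : Fin (2 * d + 1) => T^[k]) fun k : Fin (min n (2 * d) + 1) => T^[k])
    (b := Sum.elim (fun _ => x) fun _ => y)
    (by rintro (k | k) <;> exact (hTc.iterate _).continuousAt)
    (by convert hTi.injective_sumElim_iterate_apply hx hy (2 * d + 1) (2 * d) using 1
        ext (k | k) <;> rfl)
  filter_upwards [(tendsto_closedBall_smallSets x).eventually (eventually_smallSets_subset.2 hxP),
    (tendsto_closedBall_smallSets y).eventually (eventually_smallSets_subset.2 hyP), hdisj]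
    with ε hεx hεy hε
  refine ⟨le_add_self, isClosed_closedBall.isCompact,
    (isClosed_closedBall.inter (isClosed_periodicLE hTc _)).isCompact,
    fun z hz => ⟨hz.2, hεy hz.1⟩, hεx, fun i j hij => (hε hij).mono ?_ ?_⟩
  · rcases i with k | k
    exacts [subset_rfl, image_mono inter_subset_left]
  · rcases j with k | k
    exacts [subset_rfl, image_mono inter_subset_left]

theorem exists_isSeparatedRectangle_mem_nhdsWithin (hTc : Continuous T) (hTi : Injective T)
    (d : ℕ) {x y : X} (hx : x ∉ periodicPts T) {n : ℕ} (hy : minimalPeriod T y = n + 1) :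
    (∃ K ∈ 𝓝[(periodicPts T)ᶜ ×ˢ {z | minimalPeriod T z = n + 1}] (x, y),
      IsSeparatedRectangle T d K) ∧
    ∃ K ∈ 𝓝[{z | minimalPeriod T z = n + 1} ×ˢ (periodicPts T)ᶜ] (y, x),
      IsSeparatedRectangle T d K := by
  obtain ⟨ε, hε, hεpos⟩ := ((eventually_isSeparatedPair_closedBall hTc hTi d hx hy).filter_mono
    nhdsWithin_le_nhds |>.and self_mem_nhdsWithin).exists (f := 𝓝[>] 0)
  have hA : closedBall x ε ∈ 𝓝[(periodicPts T)ᶜ] x :=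
    mem_nhdsWithin_of_mem_nhds (closedBall_mem_nhds x hεpos)
  have hB : closedBall y ε ∩ periodicLE T (n + 1) ∈ 𝓝[{z | minimalPeriod T z = n + 1}] y :=
    inter_mem (mem_nhdsWithin_of_mem_nhds (closedBall_mem_nhds y hεpos))
      (mem_of_superset self_mem_nhdsWithin fun z (hz : minimalPeriod T z = n + 1) =>
        mem_periodicLE_iff.2 ⟨hz ▸ n.succ_pos, hz.le⟩)
  exact ⟨⟨_, mem_nhdsWithin_prod_iff.2 ⟨_, hA, _, hB, le_rfl⟩, _, _, _, hε, .inl rfl⟩,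
    ⟨_, mem_nhdsWithin_prod_iff.2 ⟨_, hB, _, hA, le_rfl⟩, _, _, _, hε, .inr rfl⟩⟩

theorem exists_countable_isSeparatedRectangle_cover_of_minimalPeriod_eq
    (hTc : Continuous T) (hTi : Injective T) (d n : ℕ) :
    ∃ 𝒦 : Set (Set (X × X)), 𝒦.Countable ∧ (∀ K ∈ 𝒦, IsSeparatedRectangle T d K) ∧
      (periodicPts T)ᶜ ×ˢ {y | minimalPeriod T y = n + 1} ∪
        {y | minimalPeriod T y = n + 1} ×ˢ (periodicPts T)ᶜ ⊆ ⋃₀ 𝒦 := by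
  obtain ⟨𝒦₁, hc₁, h₁, hcov₁⟩ := exists_countable_cover_of_forall_mem_nhdsWithin
    fun z (hz : z ∈ (periodicPts T)ᶜ ×ˢ {y | minimalPeriod T y = n + 1}) =>
      (exists_isSeparatedRectangle_mem_nhdsWithin hTc hTi d hz.1 hz.2).1
  obtain ⟨𝒦₂, hc₂, h₂, hcov₂⟩ := exists_countable_cover_of_forall_mem_nhdsWithin
    fun z (hz : z ∈ {y | minimalPeriod T y = n + 1} ×ˢ (periodicPts T)ᶜ) =>
      (exists_isSeparatedRectangle_mem_nhdsWithin hTc hTi d hz.2 hz.1).2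
  refine ⟨𝒦₁ ∪ 𝒦₂, hc₁.union hc₂, fun K hK => hK.elim (h₁ K) (h₂ K), ?_⟩
  rw [sUnion_union]
  exact union_subset_union hcov₁ hcov₂

theorem exists_countable_isSeparatedRectangle_cover (hTc : Continuous T) (hTi : Injective T)
    (d : ℕ) :
    ∃ 𝒦 : Set (Set (X × X)), 𝒦.Countable ∧ (∀ K ∈ 𝒦, IsSeparatedRectangle T d K) ∧
      {p : X × X | Xor (p.1 ∈ periodicPts T) (p.2 ∈ periodicPts T)} ⊆ ⋃₀ 𝒦 := by
  choose 𝒦 hc h𝒦 hcov using exists_countable_isSeparatedRectangle_cover_of_minimalPeriod_eq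
    hTc hTi d
  refine ⟨⋃ n, 𝒦 n, countable_iUnion hc, fun K hK => (mem_iUnion.1 hK).elim fun n => h𝒦 n K, ?_⟩
  have hper {x : X} (hx : x ∈ periodicPts T) : ∃ n, minimalPeriod T x = n + 1 :=
    ⟨minimalPeriod T x - 1, by have := minimalPeriod_pos_of_mem_periodicPts hx; omega⟩
  rintro ⟨x, y⟩ (⟨hx, hy⟩ | ⟨hy, hx⟩)
  · obtain ⟨n, hn⟩ := hper hx
    exact sUnion_mono (subset_iUnion 𝒦 n) (hcov n (.inr ⟨hn, hy⟩))
  · obtain ⟨n, hn⟩ := hper hy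
    exact sUnion_mono (subset_iUnion 𝒦 n) (hcov n (.inl ⟨hx, hn⟩))

end Cover

theorem stmt6 {X : Type*} [MetricSpace X] [CompactSpace X]
    (T : X → X) (hTc : Continuous T) (hTi : Function.Injective T) (d : ℕ) :
    ∃ K : ℕ → Set (X × X),
      -- the sets `K i` cover `C₃`, the set of pairs in which exactly one
      -- coordinate is periodic
      {p : X × X | Xor' (p.1 ∈ periodicPtsSet T) (p.2 ∈ periodicPtsSet T)} ⊆
        ⋃ i, K i ∧
      -- each `K i` is a product `Ū_x × Ū_y` (or the symmetric `Ū_y × Ū_x`) of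
      -- compact sets with `Ū_y ⊆ H_n`, `Ū_x ⊆ X ∖ P_n`, and
      -- `Ū_x, TŪ_x, …, T^{2d}Ū_x, Ū_y, TŪ_y, …, T^{min(n-1,2d)}Ū_y`
      -- pairwise disjoint
      ∀ i, ∃ (n : ℕ) (A B : Set X), 1 ≤ n ∧
        IsCompact A ∧ IsCompact B ∧
        B ⊆ periodicLE T n \ periodicLE T (n - 1) ∧
        A ⊆ (periodicLE T n)ᶜ ∧
        Pairwise (Disjoint on
          (Sum.elim (fun k : Fin (2 * d + 1) => T^[(k : ℕ)] '' A)
                    (fun k : Fin (min (n - 1) (2 * d) + 1) => T^[(k : ℕ)] '' B))) ∧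
        (K i = A ×ˢ B ∨ K i = B ×ˢ A) := by
  obtain ⟨𝒦, hc, h𝒦, hcov⟩ := exists_countable_isSeparatedRectangle_cover hTc hTi d
  obtain ⟨K, hcovK, hK⟩ := exists_seq_cover_of_countable (isSeparatedRectangle_empty d) hc h𝒦 hcov
  refine ⟨K, hcovK, fun i => ?_⟩
  obtain ⟨n, A, B, ⟨hn, hA, hB, hBH, hAP, hdisj⟩, hKi⟩ := hK i
  exact ⟨n, A, B, hn, hA, hB, hBH, hAP, hdisj, hKi⟩
end
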